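/- Let Σ be a finite alphabet with at least two letters, let I ⊆ Σ* be a nonempty ideal with ε ∉ I, and let 𝒯(I) = { Σ*·ι(u) : u ∈ I } be the tail structure family. Then for every reset left decomposition 𝓓 of I and every u ∈ I, there is a unique J ∈ 𝓓 with Σ*·ι(u) ⊆ J; moreover the resulting map 𝒯(I) → 𝓓 (sending each member of 𝒯(I) to the unique member of 𝓓 containing it) is surjective. -/

import Mathlib

/-- The action of a word on a state: `actW δ q w` is `q · w`. -/
def actW {A Q : Type*} (δ : Q → A → Q) (q : Q) (w : List A) : Q := w.foldl δ q

/-- The set of reset (synchronizing) words of the automaton `(Q, δ)`. -/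
def SynSet {A Q : Type*} (δ : Q → A → Q) : Set (List A) :=
  {w | ∃ q : Q, ∀ p : Q, actW δ p w = q}

/-- `I` is a two-sided ideal of `Σ*`. -/
def IsIdealLang {A : Type*} (I : Set (List A)) : Prop :=
  ∀ x u y : List A, u ∈ I → x ++ u ++ y ∈ I

/-- The set of minimal words of an ideal: `𝓜(I) = I \ (Σ⁺I ∪ IΣ⁺)`. -/
def MinWords {A : Type*} (I : Set (List A)) : Set (List A) :=
  I \ ({w | ∃ x u : List A, x ≠ [] ∧ u ∈ I ∧ w = x ++ u} ∪
       {w | ∃ u x : List A, u ∈ I ∧ x ≠ [] ∧ w = u ++ x})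

/-- `τ(u)`: the longest suffix of `u` not belonging to `I`
(the suffix of `u` of length `k` is `u.drop (u.length - k)`). -/
noncomputable def tailW {A : Type*} (I : Set (List A)) (u : List A) : List A :=
  u.drop (u.length - sSup {k | k ≤ u.length ∧ u.drop (u.length - k) ∉ I})

/-- `ι(u)`: the suffix of `u` of length `|τ(u)| + 1`,
i.e. the shortest suffix of `u` belonging to `I`. -/
noncomputable def iotaW {A : Type*} (I : Set (List A)) (u : List A) : List A :=
  u.drop (u.length - ((tailW I u).length + 1))

/-- `L` is a left ideal: `Σ*·L ⊆ L`. -/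
def IsLeftIdeal {A : Type*} (L : Set (List A)) : Prop :=
  ∀ x w : List A, w ∈ L → x ++ w ∈ L

/-- A reset left decomposition of an ideal `I`: a collection of pairwise disjoint
nonempty left ideals whose union is `I`, such that (i) for every letter `a` and
every member `J` there is a member `J'` with `J·a ⊆ J'`, and (ii) for every word
`u`, if `I·u ⊆ J` for some member `J` then `u ∈ I`. -/
def IsResetLeftDecomp {A : Type*} (I : Set (List A)) (F : Set (Set (List A))) : Prop :=
  (∀ J ∈ F, J.Nonempty) ∧
  (∀ J ∈ F, IsLeftIdeal J) ∧
  (F.PairwiseDisjoint id) ∧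
  (⋃₀ F = I) ∧
  (∀ a : A, ∀ J ∈ F, ∃ J' ∈ F, ∀ w ∈ J, w ++ [a] ∈ J') ∧
  (∀ u : List A, (∃ J ∈ F, ∀ v ∈ I, v ++ u ∈ J) → u ∈ I)

/-
Members of `𝓓` are left ideals, so the member containing `ι(u) ∈ I = ⋃ 𝓓` contains `Σ*·ι(u)`,
and disjointness makes it unique. For surjectivity, pick `w` in a member `J`: the member
containing `ι(w)` also contains its left extension `w`, hence is `J`.
-/
lemma IsLeftIdeal.mem_of_isSuffix {A : Type*} {L : Set (List A)} (hL : IsLeftIdeal L)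
    {v w : List A} (hvw : v <:+ w) (hv : v ∈ L) : w ∈ L := by
  obtain ⟨x, rfl⟩ := hvw
  exact hL x v hv

lemma IsLeftIdeal.setOf_append_subset {A : Type*} {L : Set (List A)} (hL : IsLeftIdeal L)
    {v : List A} (hv : v ∈ L) : {w : List A | ∃ x : List A, w = x ++ v} ⊆ L := by
  rintro _ ⟨x, rfl⟩
  exact hL x v hv

lemma iotaW_isSuffix {A : Type*} (I : Set (List A)) (u : List A) : iotaW I u <:+ u :=
  List.drop_suffix _ _

lemma iotaW_mem {A : Type*} {I : Set (List A)} (hε : ([] : List A) ∉ I) {u : List A}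
    (hu : u ∈ I) : iotaW I u ∈ I := by
  let S : Set ℕ := {k | k ≤ u.length ∧ u.drop (u.length - k) ∉ I}
  have hbdd : BddAbove S := ⟨u.length, fun _ hk => hk.1⟩
  have hS : sSup S ∈ S := Nat.sSup_mem ⟨0, Nat.zero_le _, by simpa using hε⟩ hbdd
  have hlt : sSup S < u.length := lt_of_le_of_ne hS.1 fun h => hS.2 (by simpa [h] using hu)
  have hiota : iotaW I u = u.drop (u.length - (sSup S + 1)) := by
    rw [iotaW, tailW, List.length_drop, Nat.sub_sub_self hlt.le]
  by_contra h
  have := le_csSup hbdd ⟨hlt, hiota ▸ h⟩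
  omega

lemma eq_of_mem_of_isSuffix {A : Type*} {D : Set (Set (List A))} (hdisj : D.PairwiseDisjoint id)
    (hleft : ∀ J ∈ D, IsLeftIdeal J) {J J' : Set (List A)} (hJ : J ∈ D) (hJ' : J' ∈ D)
    {v w : List A} (hvw : v <:+ w) (hv : v ∈ J) (hw : w ∈ J') : J = J' :=
  hdisj.elim_set hJ hJ' w ((hleft J hJ).mem_of_isSuffix hvw hv) hw

theorem stmt11_general {A : Type*}
    (I : Set (List A)) (hε : ([] : List A) ∉ I)
    (D : Set (Set (List A))) (hD : IsResetLeftDecomp I D) :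
    (∀ u ∈ I, ∃! J : Set (List A),
        J ∈ D ∧ {w : List A | ∃ x : List A, w = x ++ iotaW I u} ⊆ J) ∧
    (∀ J ∈ D, ∃ u ∈ I, {w : List A | ∃ x : List A, w = x ++ iotaW I u} ⊆ J) := by
  obtain ⟨hnonempty, hleft, hdisj, hunion, -, -⟩ := hD
  have iotaW_mem_sUnion : ∀ u ∈ I, iotaW I u ∈ ⋃₀ D := fun u hu => hunion ▸ iotaW_mem hε hu
  refine ⟨fun u hu => ?_, fun J hJ => ?_⟩
  · obtain ⟨J, hJ, hιJ⟩ := iotaW_mem_sUnion u hu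
    refine ⟨J, ⟨hJ, (hleft J hJ).setOf_append_subset hιJ⟩, fun J' ⟨hJ', hsub⟩ => ?_⟩
    exact eq_of_mem_of_isSuffix hdisj hleft hJ' hJ List.suffix_rfl (hsub ⟨[], rfl⟩) hιJ
  · obtain ⟨w, hwJ⟩ := hnonempty J hJ
    have hwI : w ∈ I := hunion ▸ Set.mem_sUnion_of_mem hwJ hJ
    obtain ⟨J', hJ', hιJ'⟩ := iotaW_mem_sUnion w hwI
    obtain rfl := eq_of_mem_of_isSuffix hdisj hleft hJ' hJ (iotaW_isSuffix I w) hιJ' hwJ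
    exact ⟨w, hwI, (hleft J' hJ').setOf_append_subset hιJ'⟩

/-- for every reset left decomposition `𝓓` of `I` and every `u ∈ I`
there is a unique `J ∈ 𝓓` containing `Σ*·ι(u)`, and the resulting map `𝒯(I) → 𝓓`
is surjective. -/
theorem stmt11 {A : Type*} [Fintype A] (hA : 1 < Fintype.card A)
    (I : Set (List A)) (hI : IsIdealLang I) (hε : ([] : List A) ∉ I)
    (hne : I.Nonempty)
    (D : Set (Set (List A))) (hD : IsResetLeftDecomp I D) :
    (∀ u ∈ I, ∃! J : Set (List A),
        J ∈ D ∧ {w : List A | ∃ x : List A, w = x ++ iotaW I u} ⊆ J) ∧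
    (∀ J ∈ D, ∃ u ∈ I, {w : List A | ∃ x : List A, w = x ++ iotaW I u} ⊆ J) :=
  stmt11_general I hε D hD
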